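/- Let M be a unital C*-algebra with a tracial state τ, let B ⊆ M be a unital *-subalgebra, and let Y ⊆ M be a subset with Y* = Y (i.e. y ∈ Y implies y* ∈ Y) and τ(y) = 0 for all y ∈ Y, such that Y and {b ∈ B : τ(b) = 0} are freely independent sets with respect to τ. Let n ≥ 1, let u ∈ B be a unitary with τ(u^k) = 0 for all integers k with 1 ≤ k ≤ n−1, and let y₁, …, yₙ ∈ Y. Then the family (u^{k−1} y_k u^{−(k−1)})_{k=1,…,n} is L-free with respect to τ. -/

import Mathlib

open scoped BigOperators ComplexOrder

section Defs

variable {A : Type*} [Ring A] [StarRing A] [Algebra ℂ A]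

/-- `τ` is a (ℂ-linear) tracial state on the unital star ℂ-algebra `A`. -/
def IsTracialState (τ : A → ℂ) : Prop :=
  (∀ (c : ℂ) (x y : A), τ (c • x + y) = c * τ x + τ y) ∧
  τ 1 = 1 ∧ (∀ x : A, 0 ≤ τ (star x * x)) ∧ (∀ x y : A, τ (x * y) = τ (y * x))

/-- `τ` is faithful. -/
def IsFaithful (τ : A → ℂ) : Prop := ∀ x : A, τ (star x * x) = 0 → x = 0

def IsProjection (p : A) : Prop := star p = p ∧ p * p = p

def IsUnitary (u : A) : Prop := star u * u = 1 ∧ u * star u = 1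

/-- The alternating word `x_{i 0} (x_{i 1})* x_{i 2} (x_{i 3})* ⋯`. -/
def LWord {n m : ℕ} (x : Fin n → A) (i : Fin m → Fin n) : A :=
  (List.ofFn fun s : Fin m => if (s : ℕ) % 2 = 0 then x (i s) else star (x (i s))).prod

/-- The alternating word `(x_{i 0})* x_{i 1} (x_{i 2})* x_{i 3} ⋯`. -/
def LWordStar {n m : ℕ} (x : Fin n → A) (i : Fin m → Fin n) : A :=
  (List.ofFn fun s : Fin m => if (s : ℕ) % 2 = 0 then star (x (i s)) else x (i s)).prod

/-- L-freeness of a finite family with respect to `τ`. -/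
def IsLFree {n : ℕ} (τ : A → ℂ) (x : Fin n → A) : Prop :=
  ∀ (k : ℕ), 1 ≤ k → ∀ i : Fin (2 * k) → Fin n,
    (∀ s t : Fin (2 * k), (t : ℕ) = (s : ℕ) + 1 → i s ≠ i t) →
    τ (LWord x i) = 0 ∧ τ (LWordStar x i) = 0

/-- Integer powers of a unitary: negative powers are powers of the adjoint. -/
def zpowU (u : A) (k : ℤ) : A := if 0 ≤ k then u ^ k.toNat else star u ^ (-k).toNat

/-- `v₁, …, v_m` are freely independent Haar unitaries with respect to `τ`. -/
def AreHaarFree {m : ℕ} (τ : A → ℂ) (v : Fin m → A) : Prop :=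
  ∀ (r : ℕ), 1 ≤ r → ∀ (i : Fin r → Fin m) (e : Fin r → ℤ),
    (∀ s, e s ≠ 0) → (∀ s t : Fin r, (t : ℕ) = (s : ℕ) + 1 → i s ≠ i t) →
    τ ((List.ofFn fun s : Fin r => zpowU (v (i s)) (e s)).prod) = 0

/-- `X` and `Y` are freely independent sets with respect to `τ`: every alternating
word with letters from `X` and `Y` has zero trace. -/
def FreeSets (τ : A → ℂ) (X Y : Set A) : Prop :=
  ∀ (m : ℕ), 1 ≤ m → ∀ z : Fin m → A,
    ((∀ s : Fin m, if (s : ℕ) % 2 = 0 then z s ∈ X else z s ∈ Y) ∨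
     (∀ s : Fin m, if (s : ℕ) % 2 = 0 then z s ∈ Y else z s ∈ X)) →
    τ ((List.ofFn z).prod) = 0

end Defs

/-!
Write `x_k = u^k y_k u^{-k}`. In an alternating word in the `x`'s and `x*`'s the inner powers of `u`
telescope, so it equals `u^{i₁} w₁ u^{i₂-i₁} w₂ ⋯ w_m u^{-i_m}` with `w_j ∈ Y` (as `Y* = Y`). Cycling
the first factor `u^{i₁}` to the end under the trace gives `w₁ u^{i₂-i₁} w₂ ⋯ w_m u^{i₁-i_m}`. All
exponents `i_{j+1} - i_j` are nonzero and at most `n - 1` in absolute value, so those powers of `u`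
lie in `B` and have trace zero (negative powers via `τ(x*) = conj τ(x)`). The last one may be `1`,
and is then dropped; either way the word alternates between `Y` and the trace-zero part of `B`,
and freeness kills it.
-/

open ComplexStarModule

namespace IsTracialState

variable {A : Type*} [Ring A] [StarRing A] [Algebra ℂ A] {τ : A → ℂ}

theorem map_add (hτ : IsTracialState τ) (x y : A) : τ (x + y) = τ x + τ y := by
  simpa using hτ.1 1 x y

theorem map_zero (hτ : IsTracialState τ) : τ 0 = 0 := by
  simpa using hτ.map_add 0 0

theorem map_smul (hτ : IsTracialState τ) (c : ℂ) (x : A) : τ (c • x) = c * τ x := by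
  simpa [hτ.map_zero] using hτ.1 c x 0

theorem im_star_mul_self (hτ : IsTracialState τ) (x : A) : (τ (star x * x)).im = 0 :=
  (Complex.nonneg_iff.mp (hτ.2.2.1 x)).2.symm

theorem im_eq_zero_of_isSelfAdjoint (hτ : IsTracialState τ) {a : A} (ha : IsSelfAdjoint a) :
    (τ a).im = 0 := by
  have h := hτ.im_star_mul_self (a + 1)
  have h₀ := hτ.im_star_mul_self a
  rw [ha.star_eq] at h₀
  rw [star_add, star_one, ha.star_eq, add_mul, mul_add, mul_add, mul_one, one_mul, mul_one,
    hτ.map_add, hτ.map_add, hτ.map_add, hτ.2.1] at h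
  simp only [Complex.add_im, Complex.one_im] at h
  linarith

theorem map_star [StarModule ℂ A] (hτ : IsTracialState τ) (x : A) :
    τ (star x) = starRingEnd ℂ (τ x) := by
  have hre := hτ.im_eq_zero_of_isSelfAdjoint (ℜ x).2
  have him := hτ.im_eq_zero_of_isSelfAdjoint (ℑ x).2
  rw [← realPart_add_I_smul_imaginaryPart x, star_add, star_smul, (ℜ x).2.star_eq,
    (ℑ x).2.star_eq, hτ.map_add, hτ.map_add, hτ.map_smul, hτ.map_smul]
  apply Complex.ext <;> simp [hre, him]

end IsTracialState

inductive Alternating {A : Type*} : Set A → Set A → List A → Prop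
  | nil {X Y : Set A} : Alternating X Y []
  | cons {X Y : Set A} {a : A} {l : List A} : a ∈ X → Alternating Y X l → Alternating X Y (a :: l)

theorem Alternating.get_mem {A : Type*} {X Y : Set A} {l : List A} (h : Alternating X Y l)
    (s : Fin l.length) : if (s : ℕ) % 2 = 0 then l.get s ∈ X else l.get s ∈ Y := by
  induction h with
  | nil => exact s.elim0
  | cons ha _ ih =>
    rcases s with ⟨_ | j, hj⟩
    · exact ha
    · have := ih ⟨j, by simpa using hj⟩
      simp only [List.get_eq_getElem, List.getElem_cons_succ] at this ⊢
      split_ifs at this ⊢ <;> first | assumption | omega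

theorem FreeSets.trace_prod_eq_zero {A : Type*} [Ring A] [StarRing A] [Algebra ℂ A] {τ : A → ℂ}
    {X Y : Set A} (h : FreeSets τ X Y) {l : List A} (hl : l ≠ []) (halt : Alternating X Y l) :
    τ l.prod = 0 := by
  simpa only [List.ofFn_get] using h l.length (List.length_pos_iff.2 hl) l.get (.inl halt.get_mem)

section Telescoping

variable {A : Type*} [Monoid A] (g : Aˣ)

def conjZPow (p : ℤ × A) : A := ((g ^ p.1 : Aˣ) : A) * p.2 * ((g ^ (-p.1) : Aˣ) : A)

/-- The word `g^{b₁-a} w₁ g^{b₂-b₁} w₂ ⋯ w_m g^{c-b_m}`, with the last factor omitted when `c = b_m`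
so that the word stays alternating. -/
def interleavePowers (c : ℤ) : ℤ → List (ℤ × A) → List A
  | a, [] => if a = c then [] else [((g ^ (c - a) : Aˣ) : A)]
  | a, (b, w) :: t => ((g ^ (b - a) : Aˣ) : A) :: w :: interleavePowers c b t

theorem prod_interleavePowers (c a : ℤ) (l : List (ℤ × A)) :
    (interleavePowers g c a l).prod =
      ((g ^ (-a) : Aˣ) : A) * (l.map (conjZPow g)).prod * ((g ^ c : Aˣ) : A) := by
  induction l generalizing a with
  | nil =>
    rw [interleavePowers, List.map_nil, List.prod_nil, mul_one]
    split_ifs with h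
    · rw [h, List.prod_nil, ← Units.val_mul, ← zpow_add, neg_add_cancel, zpow_zero, Units.val_one]
    · rw [List.prod_singleton, sub_eq_neg_add, zpow_add, Units.val_mul]
  | cons p t ih =>
    rw [interleavePowers, List.prod_cons, List.prod_cons, ih, sub_eq_neg_add, zpow_add,
      Units.val_mul, List.map_cons, List.prod_cons, conjZPow]
    simp only [mul_assoc]

theorem alternating_interleavePowers {X Y : Set A} {E : Set ℤ}
    (hX : ∀ a ∈ E, ∀ b ∈ E, a ≠ b → ((g ^ (b - a) : Aˣ) : A) ∈ X) {c : ℤ} (hc : c ∈ E) :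
    ∀ {a : ℤ} {l : List (ℤ × A)}, a ∈ E → (∀ p ∈ l, p.1 ∈ E ∧ p.2 ∈ Y) →
      (a :: l.map Prod.fst).IsChain (· ≠ ·) → Alternating X Y (interleavePowers g c a l)
  | a, [], ha, _, _ => by
    rw [interleavePowers]
    split_ifs with h
    · exact .nil
    · exact .cons (hX a ha c hc h) .nil
  | a, (b, w) :: t, ha, hl, hchain => by
    rw [List.map_cons, List.isChain_cons_cons] at hchain
    have hb := hl (b, w) List.mem_cons_self
    exact .cons (hX a ha b hb.1 hchain.1) <| .cons hb.2 <|
      alternating_interleavePowers hX hc hb.1 (fun p hp => hl p (List.mem_cons_of_mem _ hp)) hchain.2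

end Telescoping

theorem trace_prod_conjZPow_eq_zero {A : Type*} [Ring A] [StarRing A] [Algebra ℂ A] (g : Aˣ)
    {τ : A → ℂ} (htrace : ∀ x y, τ (x * y) = τ (y * x)) {X Y : Set A} (hfree : FreeSets τ Y X)
    {E : Set ℤ} (hX : ∀ a ∈ E, ∀ b ∈ E, a ≠ b → ((g ^ (b - a) : Aˣ) : A) ∈ X)
    {l : List (ℤ × A)} (hl : l ≠ []) (hmem : ∀ p ∈ l, p.1 ∈ E ∧ p.2 ∈ Y)
    (hchain : (l.map Prod.fst).IsChain (· ≠ ·)) :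
    τ (l.map (conjZPow g)).prod = 0 := by
  obtain ⟨⟨b, w⟩, t, rfl⟩ := List.exists_cons_of_ne_nil hl
  have hb := hmem (b, w) List.mem_cons_self
  have halt : Alternating Y X (w :: interleavePowers g b b t) :=
    .cons hb.2 <| alternating_interleavePowers g hX hb.1 hb.1
      (fun p hp => hmem p (List.mem_cons_of_mem _ hp)) hchain
  calc τ (((b, w) :: t).map (conjZPow g)).prod
      = τ (((g ^ b : Aˣ) : A) * (w * ((g ^ (-b) : Aˣ) : A) * (t.map (conjZPow g)).prod)) := by
        rw [List.map_cons, List.prod_cons, conjZPow]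
        simp only [mul_assoc]
    _ = τ (w * ((g ^ (-b) : Aˣ) : A) * (t.map (conjZPow g)).prod * ((g ^ b : Aˣ) : A)) := htrace _ _
    _ = τ (w :: interleavePowers g b b t).prod := by
        rw [List.prod_cons, prod_interleavePowers]
        simp only [mul_assoc]
    _ = 0 := hfree.trace_prod_eq_zero (List.cons_ne_nil _ _) halt

namespace IsUnitary

variable {A : Type*} [Ring A] [StarRing A] {u : A}

def unit (hu : IsUnitary u) : Aˣ := ⟨u, star u, hu.2, hu.1⟩

@[simp]
theorem val_unit (hu : IsUnitary u) : (hu.unit : A) = u := rfl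

@[simp]
theorem val_inv_unit (hu : IsUnitary u) : ((hu.unit⁻¹ : Aˣ) : A) = star u := rfl

theorem val_unit_zpow_sub_mem [Algebra ℂ A] [StarModule ℂ A] (hu : IsUnitary u) {τ : A → ℂ}
    (hτ : IsTracialState τ) {B : StarSubalgebra ℂ A} (huB : u ∈ B) {n : ℕ}
    (hupow : ∀ k : ℕ, 1 ≤ k → k ≤ n - 1 → τ (u ^ k) = 0) :
    ∀ a ∈ Set.Icc (0 : ℤ) (n - 1), ∀ b ∈ Set.Icc (0 : ℤ) (n - 1), a ≠ b →
      ((hu.unit ^ (b - a) : Aˣ) : A) ∈ {x : A | x ∈ B ∧ τ x = 0} := by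
  intro a ha b hb hab
  obtain ⟨k, hk | hk⟩ := Int.eq_nat_or_neg (b - a)
  · simp only [hk, zpow_natCast, Units.val_pow_eq_pow_val, val_unit]
    exact ⟨pow_mem huB k, hupow k (by omega) (by simp at ha hb; omega)⟩
  · simp only [hk, zpow_neg, zpow_natCast, ← inv_pow, Units.val_pow_eq_pow_val, val_inv_unit,
      ← star_pow]
    refine ⟨star_mem (pow_mem huB k), ?_⟩
    rw [hτ.map_star, hupow k (by omega) (by simp at ha hb; omega), map_zero]

end IsUnitary

theorem star_conj_pow {A : Type*} [Monoid A] [StarMul A] (u y : A) (k : ℕ) :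
    star (u ^ k * y * star u ^ k) = u ^ k * star y * star u ^ k := by
  simp only [star_mul, star_pow, star_star, mul_assoc]

theorem trace_prod_ofFn_conj_eq_zero {A : Type*} [Ring A] [StarRing A] [Algebra ℂ A]
    [StarModule ℂ A] {τ : A → ℂ} (hτ : IsTracialState τ) {B : StarSubalgebra ℂ A} {Y : Set A}
    (hfree : FreeSets τ Y {b : A | b ∈ B ∧ τ b = 0}) {n : ℕ} {u : A} (huB : u ∈ B)
    (hu : IsUnitary u) (hupow : ∀ k : ℕ, 1 ≤ k → k ≤ n - 1 → τ (u ^ k) = 0) {m : ℕ} (hm : m ≠ 0)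
    (i : Fin m → Fin n) (hne : ∀ s t : Fin m, (t : ℕ) = (s : ℕ) + 1 → i s ≠ i t)
    (w : Fin m → A) (hw : ∀ s, w s ∈ Y) :
    τ (List.ofFn fun s => u ^ (i s : ℕ) * w s * star u ^ (i s : ℕ)).prod = 0 := by
  have h := trace_prod_conjZPow_eq_zero hu.unit hτ.2.2.2 hfree
    (hu.val_unit_zpow_sub_mem hτ huB hupow) (l := List.ofFn fun s => (((i s : ℕ) : ℤ), w s))
    (by simpa using hm)
    (by simp only [List.mem_ofFn, forall_exists_index, forall_apply_eq_imp_iff]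
        exact fun s => ⟨⟨by omega, by have := (i s).isLt; omega⟩, hw s⟩)
    (by rw [List.map_ofFn, List.isChain_ofFn]
        exact fun j hj h => hne ⟨j, by omega⟩ ⟨j + 1, hj⟩ rfl (Fin.ext (by simpa using h)))
  simpa [List.map_ofFn, Function.comp_def, conjZPow] using h

theorem lfree_of_free_from_subalgebra_general
    {M : Type*} [NormedRing M] [StarRing M] [NormedAlgebra ℂ M]
    [StarModule ℂ M]
    (τ : M → ℂ) (hτ : IsTracialState τ)
    (B : StarSubalgebra ℂ M) (Y : Set M)
    (hYstar : ∀ y ∈ Y, star y ∈ Y)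
    (hfree : FreeSets τ Y {b : M | b ∈ B ∧ τ b = 0})
    (n : ℕ)
    (u : M) (huB : u ∈ B) (hu : IsUnitary u)
    (hupow : ∀ k : ℕ, 1 ≤ k → k ≤ n - 1 → τ (u ^ k) = 0)
    (y : Fin n → M) (hy : ∀ k, y k ∈ Y) :
    IsLFree τ (fun k : Fin n => u ^ (k : ℕ) * y k * (star u) ^ (k : ℕ)) := by
  intro k hk i hne
  simp only [LWord, LWordStar, star_conj_pow, ← mul_ite, ← ite_mul]
  exact ⟨trace_prod_ofFn_conj_eq_zero hτ hfree huB hu hupow (by omega) i hne _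
      fun s => by split_ifs; exacts [hy _, hYstar _ (hy _)],
    trace_prod_ofFn_conj_eq_zero hτ hfree huB hu hupow (by omega) i hne _
      fun s => by split_ifs; exacts [hYstar _ (hy _), hy _]⟩

/-- If `Y = Y*` is a set of trace-zero elements that is freely
independent from the trace-zero part of a unital ∗-subalgebra `B`, and `u ∈ B`
is a unitary with `τ(u^k) = 0` for `1 ≤ k ≤ n-1`, then for all `y₁, …, yₙ ∈ Y`
the family `(u^{k-1} y_k u^{-(k-1)})_k` is L-free. -/
theorem lfree_of_free_from_subalgebra
    {M : Type*} [NormedRing M] [StarRing M] [CStarRing M] [NormedAlgebra ℂ M]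
    [StarModule ℂ M] [CompleteSpace M]
    (τ : M → ℂ) (hτ : IsTracialState τ)
    (B : StarSubalgebra ℂ M) (Y : Set M)
    (hYstar : ∀ y ∈ Y, star y ∈ Y) (hYtrace : ∀ y ∈ Y, τ y = 0)
    (hfree : FreeSets τ Y {b : M | b ∈ B ∧ τ b = 0})
    (n : ℕ) (hn : 1 ≤ n)
    (u : M) (huB : u ∈ B) (hu : IsUnitary u)
    (hupow : ∀ k : ℕ, 1 ≤ k → k ≤ n - 1 → τ (u ^ k) = 0)
    (y : Fin n → M) (hy : ∀ k, y k ∈ Y) :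
    IsLFree τ (fun k : Fin n => u ^ (k : ℕ) * y k * (star u) ^ (k : ℕ)) :=
  lfree_of_free_from_subalgebra_general τ hτ B Y hYstar hfree n u huB hu hupow y hy
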